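/- Let D be a finitely generated abelian group and S a D-graded ring. If f, g ∈ S are relevant homogeneous elements, then the product fg is relevant. -/
import Mathlib


/-- A homogeneous element `f` of a `D`-graded ring is *relevant* if the degrees of all
homogeneous divisors of powers of `f` generate a subgroup of finite index in `D`. -/
def RelevantDiv {D A : Type*} [AddCommGroup D] [CommRing A]
    (𝒜 : D → AddSubgroup A) (f : A) : Prop :=
  (∃ d, f ∈ 𝒜 d) ∧
    (AddSubgroup.closure {d : D | ∃ g ∈ 𝒜 d, ∃ n : ℕ, g ∣ f ^ n}).FiniteIndex

/-- In a ring graded by a finitely generated abelian group, the product of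
two relevant homogeneous elements is relevant. -/
theorem stmt_7 {D S : Type*} [AddCommGroup D] [AddGroup.FG D] [DecidableEq D]
    [CommRing S] (𝒜 : D → AddSubgroup S) [GradedRing 𝒜]
    (f g : S) (hf : RelevantDiv 𝒜 f) (hg : RelevantDiv 𝒜 g) :
    RelevantDiv 𝒜 (f * g) := by
  obtain ⟨⟨df, hdf⟩, hfin⟩ := hf
  obtain ⟨⟨dg, hdg⟩, _⟩ := hg
  refine ⟨⟨df + dg, SetLike.mul_mem_graded hdf hdg⟩, ?_⟩
  have hle : AddSubgroup.closure {d : D | ∃ g' ∈ 𝒜 d, ∃ n : ℕ, g' ∣ f ^ n} ≤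
      AddSubgroup.closure {d : D | ∃ g' ∈ 𝒜 d, ∃ n : ℕ, g' ∣ (f * g) ^ n} := by
    apply AddSubgroup.closure_mono
    rintro d ⟨g', hg', n, hdvd⟩
    exact ⟨g', hg', n, hdvd.trans (by rw [mul_pow]; exact dvd_mul_right _ _)⟩
  haveI := hfin
  exact AddSubgroup.finiteIndex_of_le hle
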